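/- arXiv:math/0410442 — 2 statements merged into one kernel-verified Lean document; each statement's English description precedes it below -/
import Mathlib

section
/- Let σ be a cone in the smallest class of rational polyhedral cones closed under direct sum and containing all rational simplex cones, with dim(σ) = n > 1. If σ has exactly 2n − 2 extreme rays, then σ is a general bipyramidal cone. -/
open scoped BigOperators

/-- The cone of nonnegative rational combinations of elements of `S`. -/
def posSpan {n : ℕ} (S : Set (Fin n → ℚ)) : Set (Fin n → ℚ) :=
  {x | ∃ (k : ℕ) (c : Fin k → ℚ) (b : Fin k → (Fin n → ℚ)),
    (∀ i, 0 ≤ c i) ∧ (∀ i, b i ∈ S) ∧ x = ∑ i, c i • b i}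

/-- A rational polyhedral cone: `posSpan` of a finite set. -/
def IsPolyCone {n : ℕ} (σ : Set (Fin n → ℚ)) : Prop :=
  ∃ B : Finset (Fin n → ℚ), σ = posSpan (B : Set (Fin n → ℚ))

/-- A cone is strongly convex if `σ ∩ (-σ) = {0}`. -/
def StronglyConvex {n : ℕ} (σ : Set (Fin n → ℚ)) : Prop :=
  ∀ x, x ∈ σ → -x ∈ σ → x = 0

/-- dot product in `ℚ^n`. -/
def dotQ {n : ℕ} (c x : Fin n → ℚ) : ℚ := ∑ i, c i * x i

/-- `R` is an extreme ray of `σ`: a one-dimensional face cut out by a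
supporting vector `c`. -/
def IsExtremeRay {n : ℕ} (σ R : Set (Fin n → ℚ)) : Prop :=
  ∃ c : Fin n → ℚ, (∀ x ∈ σ, 0 ≤ dotQ c x) ∧
    R = {x ∈ σ | dotQ c x = 0} ∧
    Module.finrank ℚ (Submodule.span ℚ R) = 1

/-- The dimension of a cone: dimension of its rational linear span. -/
noncomputable def coneDim {n : ℕ} (σ : Set (Fin n → ℚ)) : ℕ :=
  Module.finrank ℚ (Submodule.span ℚ σ)

/-- `σ` is the direct sum of `σ₁` and `σ₂` along `a`. -/
def IsDirectSumAlong {n : ℕ} (σ₁ σ₂ σ : Set (Fin n → ℚ)) (a : Fin n → ℚ) : Prop :=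
  a ∈ σ₁ ∩ σ₂ ∧
  Submodule.span ℚ σ₁ ⊓ Submodule.span ℚ σ₂ = Submodule.span ℚ {a} ∧
  σ = posSpan (σ₁ ∪ σ₂)

/-- `σ` is a direct sum of `σ₁` and `σ₂`. -/
def IsDirectSum {n : ℕ} (σ₁ σ₂ σ : Set (Fin n → ℚ)) : Prop :=
  ∃ a, IsDirectSumAlong σ₁ σ₂ σ a

/-- `a` lies on an extreme ray of `σ`. -/
def OnExtremeRay {n : ℕ} (σ : Set (Fin n → ℚ)) (a : Fin n → ℚ) : Prop :=
  ∃ R, IsExtremeRay σ R ∧ a ∈ R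

/-- The ray `ℚ⁺ r`. -/
def rayOf {n : ℕ} (r : Fin n → ℚ) : Set (Fin n → ℚ) :=
  {x | ∃ q : ℚ, 0 ≤ q ∧ x = q • r}

/-- General bipyramidal cones: the smallest class of cones containing all
2-simplex cones and closed under direct sum of internal type. -/
inductive GenBipyramidal {n : ℕ} : Set (Fin n → ℚ) → Prop
  | simplex2 (r₁ r₂ : Fin n → ℚ) (h : LinearIndependent ℚ ![r₁, r₂]) :
      GenBipyramidal (posSpan {r₁, r₂})
  | internal (σ₁ σ₂ : Set (Fin n → ℚ)) (a : Fin n → ℚ)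
      (h₁ : GenBipyramidal σ₁) (h₂ : GenBipyramidal σ₂)
      (hds : IsDirectSumAlong σ₁ σ₂ (posSpan (σ₁ ∪ σ₂)) a)
      (hint₁ : ¬ OnExtremeRay σ₁ a) (hint₂ : ¬ OnExtremeRay σ₂ a) :
      GenBipyramidal (posSpan (σ₁ ∪ σ₂))

/-- The smallest class of cones containing all rational simplex cones and
closed under direct sum (the class of complete intersection cones). -/
inductive CICone {n : ℕ} : Set (Fin n → ℚ) → Prop
  | simplex (s : ℕ) (r : Fin s → (Fin n → ℚ)) (h : LinearIndependent ℚ r) :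
      CICone (posSpan (Set.range r))
  | dsum (σ₁ σ₂ : Set (Fin n → ℚ)) (h₁ : CICone σ₁) (h₂ : CICone σ₂)
      (hds : IsDirectSum σ₁ σ₂ (posSpan (σ₁ ∪ σ₂))) :
      CICone (posSpan (σ₁ ∪ σ₂))

/-!
Induction over the construction of the cone, with the invariant: the cone is strongly convex and
has at most `max d (2 * d - 2)` extreme rays, `d` its dimension, with equality for `d > 1` only
for general bipyramidal cones. Simplex cones satisfy this, since each of their extreme rays is
spanned by one generator. In a direct sum `C₁ ⊔ C₂` along `a`, a supporting functional cuts the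
sum in the sum of the faces it cuts from `C₁` and `C₂`; as the result is a line and
`span C₁ ∩ span C₂ = ℚ a`, one of the two faces lies on the ray through `a` and is absorbed by
the other. So every extreme ray of the sum is an extreme ray of a summand, and one through
`a ≠ 0` is an extreme ray of both: the ray counts add, and drop by at least one in the external
case, while the dimensions add up to `d + dim ℚ a`. Equality then only survives for two
one-dimensional summands with `a = 0` (a 2-simplex) or an internal sum of two extremal summands.
-/

lemma mem_span_singleton_of_finrank_eq_one {K V : Type*} [Field K] [AddCommGroup V] [Module K V]
    {W : Submodule K V} [FiniteDimensional K W] (hW : Module.finrank K W = 1) {y z : V}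
    (hy : y ∈ W) (hy₀ : y ≠ 0) (hz : z ∈ W) : z ∈ K ∙ y := by
  have hWy : K ∙ y = W := Submodule.eq_of_le_of_finrank_eq
    ((Submodule.span_singleton_le_iff_mem _ _).2 hy) (by rw [finrank_span_singleton hy₀, hW])
  exact hWy ▸ hz

section Cones

variable {n : ℕ}

lemma dotQ_eq_dotProduct (c x : Fin n → ℚ) : dotQ c x = c ⬝ᵥ x := rfl

abbrev extremeRays (σ : Set (Fin n → ℚ)) : Set (Set (Fin n → ℚ)) := {R | IsExtremeRay σ R}

lemma posSpan_eq_hull (S : Set (Fin n → ℚ)) : posSpan S = PointedCone.hull ℚ S := by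
  ext x
  constructor
  · rintro ⟨k, c, b, hc, hb, rfl⟩
    exact Submodule.sum_mem _ fun i _ =>
      PointedCone.smul_mem _ (hc i) (Submodule.subset_span (hb i))
  · intro hx
    obtain ⟨k, c, b, rfl⟩ := Submodule.mem_span_set'.1 hx
    exact ⟨k, fun i => c i, fun i => b i, fun i => (c i).2, fun i => (b i).2, rfl⟩

lemma posSpan_union_coe (C₁ C₂ : PointedCone ℚ (Fin n → ℚ)) :
    posSpan (↑C₁ ∪ ↑C₂) = ((C₁ ⊔ C₂ : PointedCone ℚ _) : Set (Fin n → ℚ)) := by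
  rw [posSpan_eq_hull, PointedCone.hull, Submodule.span_union, Submodule.span_eq,
    Submodule.span_eq]

lemma span_hull (S : Set (Fin n → ℚ)) :
    Submodule.span ℚ (PointedCone.hull ℚ S : Set (Fin n → ℚ)) = Submodule.span ℚ S :=
  Submodule.span_span_of_tower _ _ _

lemma coneDim_sup_add_finrank_inf (C₁ C₂ : PointedCone ℚ (Fin n → ℚ)) :
    coneDim ((C₁ ⊔ C₂ : PointedCone ℚ _) : Set (Fin n → ℚ)) +
        Module.finrank ℚ ↥(Submodule.span ℚ (C₁ : Set (Fin n → ℚ)) ⊓ Submodule.span ℚ ↑C₂) =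
      coneDim (C₁ : Set (Fin n → ℚ)) + coneDim (C₂ : Set (Fin n → ℚ)) := by
  rw [coneDim, ← posSpan_union_coe, posSpan_eq_hull, span_hull, Submodule.span_union]
  exact Submodule.finrank_sup_add_finrank_inf_eq _ _

lemma finrank_span_singleton_lt_coneDim {σ : Set (Fin n → ℚ)} {a : Fin n → ℚ} (ha : a ∈ σ)
    (hle : ¬ Submodule.span ℚ σ ≤ ℚ ∙ a) : Module.finrank ℚ (ℚ ∙ a) < coneDim σ :=
  Submodule.finrank_lt_finrank_of_lt <| lt_of_le_not_ge
    ((Submodule.span_singleton_le_iff_mem _ _).2 (Submodule.subset_span ha)) hle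

end Cones

namespace StronglyConvex

variable {n : ℕ} {C C₁ C₂ : PointedCone ℚ (Fin n → ℚ)} {a x y : Fin n → ℚ}

lemma eq_zero_of_add_eq_zero (hC : StronglyConvex (C : Set (Fin n → ℚ))) (hx : x ∈ C)
    (hy : y ∈ C) (h : x + y = 0) : x = 0 :=
  hC x hx (neg_eq_of_add_eq_zero_right h ▸ hy)

lemma mem_hull_singleton (hC : StronglyConvex (C : Set (Fin n → ℚ))) (ha : a ∈ C)
    (hx : x ∈ C) (hxa : x ∈ ℚ ∙ a) : x ∈ PointedCone.hull ℚ {a} := by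
  obtain ⟨q, rfl⟩ := Submodule.mem_span_singleton.1 hxa
  rcases le_or_gt 0 q with hq | hq
  · exact PointedCone.smul_mem _ hq (Submodule.subset_span rfl)
  · have hneg : -(q • a) ∈ C := by
      rw [← neg_smul]
      exact C.smul_mem (by linarith) ha
    rw [hC _ hx hneg]
    exact zero_mem _

lemma eq_hull_singleton (hC : StronglyConvex (C : Set (Fin n → ℚ))) (ha : a ∈ C)
    (hspan : Submodule.span ℚ (C : Set (Fin n → ℚ)) ≤ ℚ ∙ a) : C = PointedCone.hull ℚ {a} :=
  le_antisymm (fun _ hx => hC.mem_hull_singleton ha hx (hspan (Submodule.subset_span hx)))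
    ((Submodule.span_singleton_le_iff_mem _ _).2 ha)

lemma exists_eq_hull_singleton (hC : StronglyConvex (C : Set (Fin n → ℚ)))
    (hdim : coneDim (C : Set (Fin n → ℚ)) = 1) : ∃ w, C = PointedCone.hull ℚ {w} := by
  obtain ⟨w, hw, hw₀⟩ : ∃ w ∈ C, w ≠ 0 := by
    by_contra! h
    rw [coneDim, (Submodule.span_eq_bot).2 h, finrank_bot] at hdim
    exact zero_ne_one hdim
  exact ⟨w, hC.eq_hull_singleton hw fun z hz =>
    mem_span_singleton_of_finrank_eq_one hdim (Submodule.subset_span hw) hw₀ hz⟩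

lemma sup (hC₁ : StronglyConvex (C₁ : Set (Fin n → ℚ)))
    (hC₂ : StronglyConvex (C₂ : Set (Fin n → ℚ))) (ha₁ : a ∈ C₁) (ha₂ : a ∈ C₂)
    (hspan : Submodule.span ℚ (C₁ : Set (Fin n → ℚ)) ⊓ Submodule.span ℚ ↑C₂ ≤ ℚ ∙ a) :
    StronglyConvex ((C₁ ⊔ C₂ : PointedCone ℚ _) : Set (Fin n → ℚ)) := by
  intro x hx hnx
  obtain ⟨s₁, hs₁, s₂, hs₂, rfl⟩ := Submodule.mem_sup.1 hx
  obtain ⟨t₁, ht₁, t₂, ht₂, ht⟩ := Submodule.mem_sup.1 hnx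
  have hsum : (s₁ + t₁) + (s₂ + t₂) = 0 := by
    rw [add_add_add_comm, ht, add_neg_cancel]
  -- `s₁ + t₁ = -(s₂ + t₂)` lies in both spans, hence on the ray through `a`, hence in `C₂`.
  have hu : s₁ + t₁ ∈ C₂ := by
    refine (Submodule.span_singleton_le_iff_mem _ _).2 ha₂ <| hC₁.mem_hull_singleton ha₁
      (add_mem hs₁ ht₁) (hspan ⟨Submodule.subset_span (add_mem hs₁ ht₁), ?_⟩)
    rw [eq_neg_of_add_eq_zero_left hsum]
    exact neg_mem (Submodule.subset_span (add_mem hs₂ ht₂))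
  have hu₀ := hC₂.eq_zero_of_add_eq_zero hu (add_mem hs₂ ht₂) hsum
  rw [hu₀, zero_add] at hsum
  rw [hC₁.eq_zero_of_add_eq_zero hs₁ ht₁ hu₀, hC₂.eq_zero_of_add_eq_zero hs₂ ht₂ hsum, add_zero]

end StronglyConvex

section SimplexCones

variable {n : ℕ}

lemma stronglyConvex_hull_range {ι : Type*} [Fintype ι] {v : ι → Fin n → ℚ}
    (hv : LinearIndependent ℚ v) :
    StronglyConvex (PointedCone.hull ℚ (Set.range v) : Set (Fin n → ℚ)) := by
  intro x hx hnx
  obtain ⟨f, rfl⟩ := (Submodule.mem_span_range_iff_exists_fun _).1 hx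
  obtain ⟨g, hg⟩ := (Submodule.mem_span_range_iff_exists_fun _).1 hnx
  have hfg : ∀ i, (f i : ℚ) + g i = 0 := Fintype.linearIndependent_iff.1 hv _ <| by
    simp only [add_smul, Finset.sum_add_distrib, Nonneg.coe_smul, hg, add_neg_cancel]
  have hf : ∀ i, f i = 0 := fun i =>
    Subtype.ext <| show (f i : ℚ) = 0 by linarith [(f i).2, (g i).2, hfg i]
  simp [hf]

lemma face_hull_range {ι : Type*} [Fintype ι] (v : ι → Fin n → ℚ) (c : Fin n → ℚ)
    (hc : ∀ i, 0 ≤ dotQ c (v i)) :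
    {x ∈ (PointedCone.hull ℚ (Set.range v) : Set (Fin n → ℚ)) | dotQ c x = 0} =
      PointedCone.hull ℚ (v '' {i | dotQ c (v i) = 0}) := by
  ext x
  constructor
  · rintro ⟨hx, hx₀⟩
    obtain ⟨f, rfl⟩ := (Submodule.mem_span_range_iff_exists_fun _).1 hx
    have hsum : ∑ i, (f i : ℚ) * dotQ c (v i) = 0 := by
      simpa [dotQ_eq_dotProduct, dotProduct_sum, ← Nonneg.coe_smul] using hx₀
    have hterm := (Finset.sum_eq_zero_iff_of_nonneg fun i _ => mul_nonneg (f i).2 (hc i)).1 hsum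
    refine Submodule.sum_mem _ fun i hi => ?_
    rcases mul_eq_zero.1 (hterm i hi) with h | h
    · rw [show f i = 0 from Subtype.ext h, zero_smul]
      exact zero_mem _
    · exact Submodule.smul_mem _ _ (Submodule.subset_span ⟨i, h, rfl⟩)
  · intro hx
    refine ⟨Submodule.span_mono (Set.image_subset_range _ _) hx, ?_⟩
    have hker : PointedCone.hull ℚ (v '' {i | dotQ c (v i) = 0}) ≤
        LinearMap.ker (dotProductBilin ℚ ℚ c) :=
      Submodule.span_le.2 (by rintro _ ⟨i, hi, rfl⟩; exact hi)
    exact hker hx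

lemma extremeRays_hull_range_subset {ι : Type*} [Fintype ι] {v : ι → Fin n → ℚ}
    (hv : LinearIndependent ℚ v) :
    extremeRays (PointedCone.hull ℚ (Set.range v) : Set (Fin n → ℚ)) ⊆
      Set.range fun i => (PointedCone.hull ℚ {v i} : Set (Fin n → ℚ)) := by
  classical
  rintro R ⟨c, hc, rfl, hR⟩
  rw [face_hull_range v c fun i => hc _ (Submodule.subset_span ⟨i, rfl⟩)] at hR ⊢
  have hvI : LinearIndependent ℚ fun i : {i | dotQ c (v i) = 0} => v i :=
    hv.comp _ Subtype.val_injective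
  rw [span_hull, Set.image_eq_range, finrank_span_eq_card hvI, Fintype.card_eq_one_iff] at hR
  obtain ⟨⟨i, hi⟩, huniq⟩ := hR
  have hI : {i | dotQ c (v i) = 0} = {i} :=
    Set.eq_singleton_iff_unique_mem.2 ⟨hi, fun j hj => congrArg Subtype.val (huniq ⟨j, hj⟩)⟩
  rw [hI, Set.image_singleton]
  exact ⟨i, rfl⟩

end SimplexCones

section DirectSum

variable {n : ℕ} {C₁ C₂ : PointedCone ℚ (Fin n → ℚ)} {a : Fin n → ℚ} {c : Fin n → ℚ}

lemma face_sup_eq_left (hC₂ : StronglyConvex (C₂ : Set (Fin n → ℚ))) (ha₁ : a ∈ C₁)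
    (ha₂ : a ∈ C₂) (hc : ∀ x ∈ ((C₁ ⊔ C₂ : PointedCone ℚ _) : Set (Fin n → ℚ)), 0 ≤ dotQ c x)
    (hF : {x ∈ (C₂ : Set (Fin n → ℚ)) | dotQ c x = 0} ⊆ ℚ ∙ a) :
    {x ∈ ((C₁ ⊔ C₂ : PointedCone ℚ _) : Set (Fin n → ℚ)) | dotQ c x = 0} =
      {x ∈ (C₁ : Set (Fin n → ℚ)) | dotQ c x = 0} := by
  ext x
  constructor
  · rintro ⟨hx, hx₀⟩
    obtain ⟨y, hy, z, hz, rfl⟩ := Submodule.mem_sup.1 hx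
    have hy' := hc y (Submodule.mem_sup_left hy)
    have hz' := hc z (Submodule.mem_sup_right hz)
    have hz₀ : dotQ c z = 0 := by
      rw [dotQ_eq_dotProduct, dotProduct_add] at hx₀
      rw [dotQ_eq_dotProduct] at hy' hz' ⊢
      linarith
    have hzC₁ : z ∈ C₁ := (Submodule.span_singleton_le_iff_mem _ _).2 ha₁
      (hC₂.mem_hull_singleton ha₂ hz (hF ⟨hz, hz₀⟩))
    exact ⟨add_mem hy hzC₁, hx₀⟩
  · rintro ⟨hx, hx₀⟩
    exact ⟨Submodule.mem_sup_left hx, hx₀⟩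

lemma face_sup_subset_or
    (hspan : Submodule.span ℚ (C₁ : Set (Fin n → ℚ)) ⊓ Submodule.span ℚ ↑C₂ ≤ ℚ ∙ a)
    (hR : Module.finrank ℚ (Submodule.span ℚ
      {x ∈ ((C₁ ⊔ C₂ : PointedCone ℚ _) : Set (Fin n → ℚ)) | dotQ c x = 0}) = 1) :
    {x ∈ (C₁ : Set (Fin n → ℚ)) | dotQ c x = 0} ⊆ ℚ ∙ a ∨
      {x ∈ (C₂ : Set (Fin n → ℚ)) | dotQ c x = 0} ⊆ ℚ ∙ a := by
  refine or_iff_not_imp_left.2 fun h₁ z ⟨hz, hz₀⟩ => ?_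
  obtain ⟨y, ⟨hy, hy₀⟩, hya⟩ := Set.not_subset.1 h₁
  by_cases hz0 : z = 0
  · rw [hz0]
    exact zero_mem _
  -- the face is a line, so `y` is a multiple of `z`, hence lies in both spans
  have hyz : y ∈ ℚ ∙ z := mem_span_singleton_of_finrank_eq_one hR
    (Submodule.subset_span ⟨Submodule.mem_sup_right hz, hz₀⟩) hz0
    (Submodule.subset_span ⟨Submodule.mem_sup_left hy, hy₀⟩)
  exact absurd (hspan ⟨Submodule.subset_span hy,
    (Submodule.span_singleton_le_iff_mem _ _).2 (Submodule.subset_span hz) hyz⟩) hya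

lemma isExtremeRay_left_of_sup (hC₂ : StronglyConvex (C₂ : Set (Fin n → ℚ))) (ha₁ : a ∈ C₁)
    (ha₂ : a ∈ C₂) (hc : ∀ x ∈ ((C₁ ⊔ C₂ : PointedCone ℚ _) : Set (Fin n → ℚ)), 0 ≤ dotQ c x)
    (hR : Module.finrank ℚ (Submodule.span ℚ
      {x ∈ ((C₁ ⊔ C₂ : PointedCone ℚ _) : Set (Fin n → ℚ)) | dotQ c x = 0}) = 1)
    (hF : {x ∈ (C₂ : Set (Fin n → ℚ)) | dotQ c x = 0} ⊆ ℚ ∙ a) :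
    IsExtremeRay C₁ {x ∈ ((C₁ ⊔ C₂ : PointedCone ℚ _) : Set (Fin n → ℚ)) | dotQ c x = 0} :=
  ⟨c, fun x hx => hc x (Submodule.mem_sup_left hx), face_sup_eq_left hC₂ ha₁ ha₂ hc hF, hR⟩

lemma isExtremeRay_right_of_sup (hC₁ : StronglyConvex (C₁ : Set (Fin n → ℚ))) (ha₁ : a ∈ C₁)
    (ha₂ : a ∈ C₂) (hc : ∀ x ∈ ((C₁ ⊔ C₂ : PointedCone ℚ _) : Set (Fin n → ℚ)), 0 ≤ dotQ c x)
    (hR : Module.finrank ℚ (Submodule.span ℚ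
      {x ∈ ((C₁ ⊔ C₂ : PointedCone ℚ _) : Set (Fin n → ℚ)) | dotQ c x = 0}) = 1)
    (hF : {x ∈ (C₁ : Set (Fin n → ℚ)) | dotQ c x = 0} ⊆ ℚ ∙ a) :
    IsExtremeRay C₂ {x ∈ ((C₁ ⊔ C₂ : PointedCone ℚ _) : Set (Fin n → ℚ)) | dotQ c x = 0} := by
  rw [sup_comm] at hc hR ⊢
  exact isExtremeRay_left_of_sup hC₁ ha₂ ha₁ hc hR hF

variable {R : Set (Fin n → ℚ)}

lemma isExtremeRay_of_sup (hC₁ : StronglyConvex (C₁ : Set (Fin n → ℚ)))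
    (hC₂ : StronglyConvex (C₂ : Set (Fin n → ℚ))) (ha₁ : a ∈ C₁) (ha₂ : a ∈ C₂)
    (hspan : Submodule.span ℚ (C₁ : Set (Fin n → ℚ)) ⊓ Submodule.span ℚ ↑C₂ ≤ ℚ ∙ a)
    (hR : IsExtremeRay ((C₁ ⊔ C₂ : PointedCone ℚ _) : Set (Fin n → ℚ)) R) :
    IsExtremeRay C₁ R ∨ IsExtremeRay C₂ R := by
  obtain ⟨c, hc, rfl, hR⟩ := hR
  rcases face_sup_subset_or hspan hR with hF | hF
  · exact Or.inr (isExtremeRay_right_of_sup hC₁ ha₁ ha₂ hc hR hF)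
  · exact Or.inl (isExtremeRay_left_of_sup hC₂ ha₁ ha₂ hc hR hF)

lemma isExtremeRay_of_sup_of_mem (hC₁ : StronglyConvex (C₁ : Set (Fin n → ℚ)))
    (hC₂ : StronglyConvex (C₂ : Set (Fin n → ℚ))) (ha₁ : a ∈ C₁) (ha₂ : a ∈ C₂) (ha₀ : a ≠ 0)
    (hR : IsExtremeRay ((C₁ ⊔ C₂ : PointedCone ℚ _) : Set (Fin n → ℚ)) R) (haR : a ∈ R) :
    IsExtremeRay C₁ R ∧ IsExtremeRay C₂ R := by
  obtain ⟨c, hc, rfl, hR⟩ := hR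
  have hline : ∀ x ∈ ((C₁ ⊔ C₂ : PointedCone ℚ _) : Set (Fin n → ℚ)), dotQ c x = 0 →
      x ∈ ℚ ∙ a := fun x hx hx₀ =>
    mem_span_singleton_of_finrank_eq_one hR (Submodule.subset_span haR) ha₀
      (Submodule.subset_span ⟨hx, hx₀⟩)
  exact ⟨isExtremeRay_left_of_sup hC₂ ha₁ ha₂ hc hR fun x hx =>
      hline x (Submodule.mem_sup_right hx.1) hx.2,
    isExtremeRay_right_of_sup hC₁ ha₁ ha₂ hc hR fun x hx =>
      hline x (Submodule.mem_sup_left hx.1) hx.2⟩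

lemma extremeRays_sup_subset (hC₁ : StronglyConvex (C₁ : Set (Fin n → ℚ)))
    (hC₂ : StronglyConvex (C₂ : Set (Fin n → ℚ))) (ha₁ : a ∈ C₁) (ha₂ : a ∈ C₂)
    (hspan : Submodule.span ℚ (C₁ : Set (Fin n → ℚ)) ⊓ Submodule.span ℚ ↑C₂ ≤ ℚ ∙ a) :
    extremeRays ((C₁ ⊔ C₂ : PointedCone ℚ _) : Set (Fin n → ℚ)) ⊆
      extremeRays ↑C₁ ∪ extremeRays ↑C₂ :=
  fun _ hR => isExtremeRay_of_sup hC₁ hC₂ ha₁ ha₂ hspan hR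

lemma ncard_extremeRays_sup_lt (hC₁ : StronglyConvex (C₁ : Set (Fin n → ℚ)))
    (hC₂ : StronglyConvex (C₂ : Set (Fin n → ℚ))) (ha₁ : a ∈ C₁) (ha₂ : a ∈ C₂) (ha₀ : a ≠ 0)
    (hspan : Submodule.span ℚ (C₁ : Set (Fin n → ℚ)) ⊓ Submodule.span ℚ ↑C₂ ≤ ℚ ∙ a)
    (hf₁ : (extremeRays (C₁ : Set (Fin n → ℚ))).Finite)
    (hf₂ : (extremeRays (C₂ : Set (Fin n → ℚ))).Finite)
    (hext : OnExtremeRay C₁ a ∨ OnExtremeRay C₂ a) :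
    (extremeRays ((C₁ ⊔ C₂ : PointedCone ℚ _) : Set (Fin n → ℚ))).ncard <
      (extremeRays (C₁ : Set (Fin n → ℚ))).ncard +
        (extremeRays (C₂ : Set (Fin n → ℚ))).ncard := by
  wlog hext₁ : OnExtremeRay C₁ a generalizing C₁ C₂
  · have := this hC₂ hC₁ ha₂ ha₁ (inf_comm (Submodule.span ℚ (C₁ : Set (Fin n → ℚ))) _ ▸ hspan)
      hf₂ hf₁ hext.symm (hext.resolve_left hext₁)
    rwa [sup_comm, add_comm] at this
  obtain ⟨R₁, hR₁, haR₁⟩ := hext₁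
  -- `R₁` survives in the sum only as a ray of `C₂` as well
  have hsub : extremeRays ((C₁ ⊔ C₂ : PointedCone ℚ _) : Set (Fin n → ℚ)) ⊆
      (extremeRays ↑C₁ \ {R₁}) ∪ extremeRays ↑C₂ := by
    intro R hR
    by_cases h : R = R₁
    · exact Or.inr (isExtremeRay_of_sup_of_mem hC₁ hC₂ ha₁ ha₂ ha₀ hR (h ▸ haR₁)).2
    · exact (extremeRays_sup_subset hC₁ hC₂ ha₁ ha₂ hspan hR).imp (fun h' => ⟨h', h⟩) id
  have h₁ := Set.ncard_le_ncard hsub (hf₁.sdiff.union hf₂)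
  have h₂ := Set.ncard_union_le (extremeRays (C₁ : Set (Fin n → ℚ)) \ {R₁}) (extremeRays ↑C₂)
  have h₃ :=
    Set.ncard_sdiff_singleton_lt_of_mem (s := extremeRays (C₁ : Set (Fin n → ℚ))) hR₁ hf₁
  omega

end DirectSum

section Induction

variable {n : ℕ}

/-- `max` rather than `2 * d - 2` because a simplex cone of dimension `d ≤ 1` has `d` rays. -/
structure RayBound (C : PointedCone ℚ (Fin n → ℚ)) : Prop where
  stronglyConvex : StronglyConvex (C : Set (Fin n → ℚ))
  finite : (extremeRays (C : Set (Fin n → ℚ))).Finite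
  ncard_le : (extremeRays (C : Set (Fin n → ℚ))).ncard ≤
    max (coneDim (C : Set (Fin n → ℚ))) (2 * coneDim (C : Set (Fin n → ℚ)) - 2)
  genBipyramidal : 1 < coneDim (C : Set (Fin n → ℚ)) →
    (extremeRays (C : Set (Fin n → ℚ))).ncard = 2 * coneDim (C : Set (Fin n → ℚ)) - 2 →
    GenBipyramidal (C : Set (Fin n → ℚ))

theorem RayBound.hull_range {s : ℕ} {r : Fin s → Fin n → ℚ} (hr : LinearIndependent ℚ r) :
    RayBound (PointedCone.hull ℚ (Set.range r)) := by
  have hdim : coneDim (PointedCone.hull ℚ (Set.range r) : Set (Fin n → ℚ)) = s := by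
    rw [coneDim, span_hull, finrank_span_eq_card hr, Fintype.card_fin]
  have hsub := extremeRays_hull_range_subset hr
  have hcard :
      (extremeRays (PointedCone.hull ℚ (Set.range r) : Set (Fin n → ℚ))).ncard ≤ s := by
    refine (Set.ncard_le_ncard hsub (Set.finite_range _)).trans ?_
    rw [← Set.image_univ]
    exact (Set.ncard_image_le Set.finite_univ).trans (by simp)
  refine ⟨stronglyConvex_hull_range hr, (Set.finite_range _).subset hsub, by omega,
    fun hs hcount => ?_⟩
  obtain rfl : s = 2 := by omega
  have hr₂ : ![r 0, r 1] = r := by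
    ext i
    fin_cases i <;> rfl
  rw [← hr₂, Matrix.range_cons_cons_empty, ← posSpan_eq_hull]
  exact GenBipyramidal.simplex2 _ _ (hr₂ ▸ hr)

variable {C₁ C₂ : PointedCone ℚ (Fin n → ℚ)} {a : Fin n → ℚ}

lemma sup_eq_right_of_span_le (hC₁ : StronglyConvex (C₁ : Set (Fin n → ℚ))) (ha₁ : a ∈ C₁)
    (ha₂ : a ∈ C₂) (hle : Submodule.span ℚ (C₁ : Set (Fin n → ℚ)) ≤ ℚ ∙ a) : C₁ ⊔ C₂ = C₂ :=
  sup_eq_right.2 <| (hC₁.eq_hull_singleton ha₁ hle).trans_le <|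
    (Submodule.span_singleton_le_iff_mem _ _).2 ha₂

lemma genBipyramidal_sup_of_coneDim_eq_one (hC₁ : StronglyConvex (C₁ : Set (Fin n → ℚ)))
    (hC₂ : StronglyConvex (C₂ : Set (Fin n → ℚ))) (hd₁ : coneDim (C₁ : Set (Fin n → ℚ)) = 1)
    (hd₂ : coneDim (C₂ : Set (Fin n → ℚ)) = 1)
    (hd : coneDim ((C₁ ⊔ C₂ : PointedCone ℚ _) : Set (Fin n → ℚ)) = 2) :
    GenBipyramidal ((C₁ ⊔ C₂ : PointedCone ℚ _) : Set (Fin n → ℚ)) := by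
  obtain ⟨w₁, rfl⟩ := hC₁.exists_eq_hull_singleton hd₁
  obtain ⟨w₂, rfl⟩ := hC₂.exists_eq_hull_singleton hd₂
  have hw : PointedCone.hull ℚ {w₁} ⊔ PointedCone.hull ℚ {w₂} =
      PointedCone.hull ℚ (Set.range ![w₁, w₂]) := by
    rw [Matrix.range_cons_cons_empty, Set.insert_eq]
    exact (Submodule.span_union _ _).symm
  rw [hw, coneDim, span_hull] at hd
  rw [hw, ← posSpan_eq_hull, Matrix.range_cons_cons_empty]
  exact GenBipyramidal.simplex2 w₁ w₂
    (linearIndependent_iff_card_eq_finrank_span.2 (by rw [Fintype.card_fin]; exact hd.symm))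

theorem RayBound.sup (h₁ : RayBound C₁) (h₂ : RayBound C₂) (ha₁ : a ∈ C₁) (ha₂ : a ∈ C₂)
    (hspan : Submodule.span ℚ (C₁ : Set (Fin n → ℚ)) ⊓ Submodule.span ℚ ↑C₂ = ℚ ∙ a) :
    RayBound (C₁ ⊔ C₂) := by
  by_cases hle₁ : Submodule.span ℚ (C₁ : Set (Fin n → ℚ)) ≤ ℚ ∙ a
  · rwa [sup_eq_right_of_span_le h₁.stronglyConvex ha₁ ha₂ hle₁]
  by_cases hle₂ : Submodule.span ℚ (C₂ : Set (Fin n → ℚ)) ≤ ℚ ∙ a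
  · rwa [sup_comm, sup_eq_right_of_span_le h₂.stronglyConvex ha₂ ha₁ hle₂]
  have hlt₁ := finrank_span_singleton_lt_coneDim (SetLike.mem_coe.2 ha₁) hle₁
  have hlt₂ := finrank_span_singleton_lt_coneDim (SetLike.mem_coe.2 ha₂) hle₂
  have hdim := coneDim_sup_add_finrank_inf C₁ C₂
  rw [hspan] at hdim
  have hdim_a : Module.finrank ℚ (ℚ ∙ a) ≤ 1 := (finrank_span_le_card {a}).trans (by simp)
  have hsub := extremeRays_sup_subset h₁.stronglyConvex h₂.stronglyConvex ha₁ ha₂ hspan.le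
  have hcard := (Set.ncard_le_ncard hsub (h₁.finite.union h₂.finite)).trans
    (Set.ncard_union_le _ _)
  have hb₁ := h₁.ncard_le
  have hb₂ := h₂.ncard_le
  refine ⟨h₁.stronglyConvex.sup h₂.stronglyConvex ha₁ ha₂ hspan.le,
    (h₁.finite.union h₂.finite).subset hsub, by omega, fun hd hr => ?_⟩
  rcases eq_or_ne a 0 with rfl | ha₀
  · rw [Submodule.span_singleton_eq_bot.2 rfl, finrank_bot] at hdim hlt₁ hlt₂
    exact genBipyramidal_sup_of_coneDim_eq_one h₁.stronglyConvex h₂.stronglyConvex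
      (by omega) (by omega) (by omega)
  rw [finrank_span_singleton ha₀] at hdim hlt₁ hlt₂
  have hint : ¬ (OnExtremeRay C₁ a ∨ OnExtremeRay C₂ a) := fun hext => by
    have := ncard_extremeRays_sup_lt h₁.stronglyConvex h₂.stronglyConvex ha₁ ha₂ ha₀ hspan.le
      h₁.finite h₂.finite hext
    omega
  rw [← posSpan_union_coe]
  exact GenBipyramidal.internal _ _ a (h₁.genBipyramidal (by omega) (by omega))
    (h₂.genBipyramidal (by omega) (by omega)) ⟨⟨ha₁, ha₂⟩, hspan, rfl⟩
    (not_or.1 hint).1 (not_or.1 hint).2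

theorem CICone.exists_rayBound {σ : Set (Fin n → ℚ)} (hσ : CICone σ) :
    ∃ C : PointedCone ℚ (Fin n → ℚ), σ = C ∧ RayBound C := by
  induction hσ with
  | simplex s r hr => exact ⟨_, posSpan_eq_hull _, RayBound.hull_range hr⟩
  | dsum σ₁ σ₂ _ _ hds ih₁ ih₂ =>
    obtain ⟨C₁, rfl, h₁⟩ := ih₁
    obtain ⟨C₂, rfl, h₂⟩ := ih₂
    obtain ⟨a, ⟨ha₁, ha₂⟩, hspan, -⟩ := hds
    exact ⟨C₁ ⊔ C₂, posSpan_union_coe C₁ C₂, h₁.sup h₂ ha₁ ha₂ hspan⟩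

end Induction

/-- A complete intersection cone of dimension `m > 1` with exactly `2m - 2`
extreme rays is a general bipyramidal cone. -/
theorem ciCone_max_rays_bipyramidal {n : ℕ} (σ : Set (Fin n → ℚ)) (hσ : CICone σ)
    (m : ℕ) (hm : 1 < m) (hdim : coneDim σ = m)
    (hrays : {R | IsExtremeRay σ R}.ncard = 2 * m - 2) :
    GenBipyramidal σ := by
  obtain ⟨C, rfl, hC⟩ := hσ.exists_rayBound
  subst hdim
  exact hC.genBipyramidal hm hrays
end

section
/- Let A_1, A_2 ⊆ Z^n be finite sets such that Z·A_1 ∩ Z·A_2 = Z·a for some integer vector a ∈ pos(A_1) ∩ pos(A_2), with g the gcd of the coordinates of a. Suppose μ, τ are positive integers, pairwise coprime and coprime to g, with μa ∈ N·A_1 and τa ∈ N·A_2. Then Z·(τA_1) ∩ Z·(μA_2) = Z·(τμ a) and τμ a ∈ N·(τA_1) ∩ N·(μA_2), so that N·(τA_1 ∪ μA_2) is the gluing of N·(τA_1) and N·(μA_2). -/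
open scoped BigOperators

/-- Coordinatewise cast of an integer vector to a rational vector. -/
def ratify {n : ℕ} (v : Fin n → ℤ) : Fin n → ℚ := fun j => (v j : ℚ)

/-- The subsemigroup (submonoid) of ℤ^n generated by a set. -/
def natSpan {n : ℕ} (A : Set (Fin n → ℤ)) : AddSubmonoid (Fin n → ℤ) :=
  AddSubmonoid.closure A

/-- The subgroup of ℤ^n generated by a set. -/
def intSpan {n : ℕ} (A : Set (Fin n → ℤ)) : AddSubgroup (Fin n → ℤ) :=
  AddSubgroup.closure A

/-- The semigroup generated by `A` has no invertible elements (is affine). -/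
def IsAffineSemigroup {n : ℕ} (A : Set (Fin n → ℤ)) : Prop :=
  ∀ x ∈ natSpan A, -x ∈ natSpan A → x = 0

/-- `ℕ(A₁ ∪ A₂)` is the gluing of `ℕA₁` and `ℕA₂`. -/
def IsGluing {n : ℕ} (A₁ A₂ : Set (Fin n → ℤ)) : Prop :=
  ∃ a : Fin n → ℤ, a ≠ 0 ∧ a ∈ natSpan A₁ ⊓ natSpan A₂ ∧
    intSpan {a} = intSpan A₁ ⊓ intSpan A₂

/-- `ℕ(A₁ ∪ A₂)` is the s-gluing of `ℕA₁` and `ℕA₂`. -/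
def IsSGluing {n : ℕ} (A₁ A₂ : Set (Fin n → ℤ)) : Prop :=
  ∃ a : Fin n → ℤ, intSpan {a} = intSpan A₁ ⊓ intSpan A₂ ∧
    ∃ t : ℕ, 0 < t ∧ (t : ℤ) • a ∈ natSpan A₁ ⊓ natSpan A₂

/-- The gcd of the coordinates of an integer vector. -/
def coordGcd {n : ℕ} (a : Fin n → ℤ) : ℕ :=
  Finset.univ.gcd fun i => (a i).natAbs


private lemma intSpan_smul_image {n : ℕ} (c : ℤ) (A : Set (Fin n → ℤ)) :
    intSpan ((fun b => c • b) '' A)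
      = (intSpan A).map (DistribMulAction.toAddMonoidHom (Fin n → ℤ) c) := by
  rw [intSpan, intSpan, AddMonoidHom.map_closure]; rfl

private lemma natSpan_smul_image {n : ℕ} (c : ℤ) (A : Set (Fin n → ℤ)) :
    natSpan ((fun b => c • b) '' A)
      = (natSpan A).map (DistribMulAction.toAddMonoidHom (Fin n → ℤ) c) := by
  rw [natSpan, natSpan, AddMonoidHom.map_mclosure]; rfl

private lemma natSpan_le_intSpan {n : ℕ} (A : Set (Fin n → ℤ)) (x : Fin n → ℤ)
    (hx : x ∈ natSpan A) : x ∈ intSpan A :=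
  AddSubmonoid.closure_le.mpr AddSubgroup.subset_closure hx

private lemma dvd_of_dvd_coords {n : ℕ} (t : ℕ) (k : ℤ) (a : Fin n → ℤ)
    (htg : Nat.Coprime t (coordGcd a)) (h : ∀ i, (t : ℤ) ∣ k * a i) :
    t ∣ k.natAbs := by
  have h1 : ∀ i : Fin n, t ∣ k.natAbs * (a i).natAbs := by
    intro i
    have := Int.natAbs_dvd_natAbs.mpr (h i)
    simpa [Int.natAbs_mul] using this
  have h2 : t ∣ Finset.univ.gcd (fun i : Fin n => k.natAbs * (a i).natAbs) :=
    Finset.dvd_gcd fun i _ => h1 i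
  have h3 : Finset.univ.gcd (fun i : Fin n => k.natAbs * (a i).natAbs)
      = k.natAbs * coordGcd a := by
    rw [coordGcd, Finset.gcd_mul_left]; simp
  rw [h3] at h2
  exact (Nat.Coprime.dvd_of_dvd_mul_right htg h2)

/-- Rescaling the two parts by suitable coprime integers produces a genuine
gluing: `ℤ(τA₁) ∩ ℤ(μA₂) = ℤ(τμa)`, `τμa ∈ ℕ(τA₁) ∩ ℕ(μA₂)`, and hence
`ℕ(τA₁ ∪ μA₂)` is the gluing of `ℕ(τA₁)` and `ℕ(μA₂)`. -/
theorem rescaled_gluing {n : ℕ} (A₁ A₂ : Set (Fin n → ℤ))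
    (h₁ : A₁.Finite) (h₂ : A₂.Finite) (a : Fin n → ℤ) (ha : a ≠ 0)
    (hinter : intSpan A₁ ⊓ intSpan A₂ = intSpan {a})
    (hposa : ratify a ∈ posSpan (ratify '' A₁) ∩ posSpan (ratify '' A₂))
    (μ τ : ℕ) (hμ : 0 < μ) (hτ : 0 < τ)
    (hμτ : Nat.Coprime μ τ)
    (hμg : Nat.Coprime μ (coordGcd a)) (hτg : Nat.Coprime τ (coordGcd a))
    (hμa : (μ : ℤ) • a ∈ natSpan A₁) (hτa : (τ : ℤ) • a ∈ natSpan A₂) :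
    intSpan ((fun b => (τ : ℤ) • b) '' A₁) ⊓ intSpan ((fun b => (μ : ℤ) • b) '' A₂)
        = intSpan {((τ * μ : ℕ) : ℤ) • a} ∧
    ((τ * μ : ℕ) : ℤ) • a ∈
        natSpan ((fun b => (τ : ℤ) • b) '' A₁) ⊓ natSpan ((fun b => (μ : ℤ) • b) '' A₂) ∧
    IsGluing ((fun b => (τ : ℤ) • b) '' A₁) ((fun b => (μ : ℤ) • b) '' A₂) := by
  classical
  have hEq : intSpan ((fun b => (τ : ℤ) • b) '' A₁) ⊓ intSpan ((fun b => (μ : ℤ) • b) '' A₂)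
      = intSpan {((τ * μ : ℕ) : ℤ) • a} := by
    apply le_antisymm
    · intro x hx
      obtain ⟨hx₁, hx₂⟩ := hx
      rw [intSpan_smul_image] at hx₁ hx₂
      obtain ⟨u, hu, hux⟩ := hx₁
      obtain ⟨v, hv, hvx⟩ := hx₂
      have hxu : x = (τ : ℤ) • u := hux.symm
      have hxv : x = (μ : ℤ) • v := hvx.symm
      have hx1 : x ∈ intSpan A₁ := by
        rw [hxu]; exact AddSubgroup.zsmul_mem _ hu _
      have hx2 : x ∈ intSpan A₂ := by
        rw [hxv]; exact AddSubgroup.zsmul_mem _ hv _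
      have hxa : x ∈ intSpan {a} := by
        rw [← hinter]; exact ⟨hx1, hx2⟩
      obtain ⟨k, hk⟩ := AddSubgroup.mem_closure_singleton.mp hxa
      have hcoordτ : ∀ i, (τ : ℤ) ∣ k * a i := by
        intro i
        refine ⟨u i, ?_⟩
        have := congrFun (hk.trans hxu) i
        simpa [Pi.smul_apply, smul_eq_mul] using this
      have hcoordμ : ∀ i, (μ : ℤ) ∣ k * a i := by
        intro i
        refine ⟨v i, ?_⟩
        have := congrFun (hk.trans hxv) i
        simpa [Pi.smul_apply, smul_eq_mul] using this
      have hτk : τ ∣ k.natAbs := dvd_of_dvd_coords τ k a hτg hcoordτ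
      have hμk : μ ∣ k.natAbs := dvd_of_dvd_coords μ k a hμg hcoordμ
      have hτμk : τ * μ ∣ k.natAbs := (hμτ.symm).mul_dvd_of_dvd_of_dvd hτk hμk
      have hτμk' : ((τ * μ : ℕ) : ℤ) ∣ k := by
        have : ((τ * μ : ℕ) : ℤ) ∣ (k.natAbs : ℤ) := Int.natCast_dvd_natCast.mpr hτμk
        exact this.trans (Int.natAbs_dvd.mpr dvd_rfl)
      obtain ⟨m, hm⟩ := hτμk'
      apply AddSubgroup.mem_closure_singleton.mpr
      refine ⟨m, ?_⟩
      rw [smul_smul, ← hk, hm, mul_comm]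
    · apply (AddSubgroup.closure_le _).mpr
      rintro y rfl
      have h1 : ((τ * μ : ℕ) : ℤ) • a ∈ intSpan ((fun b => (τ : ℤ) • b) '' A₁) := by
        rw [intSpan_smul_image]
        refine ⟨(μ : ℤ) • a, natSpan_le_intSpan _ _ hμa, ?_⟩
        show (τ : ℤ) • (μ : ℤ) • a = _
        rw [smul_smul]; push_cast; ring_nf
      have h2 : ((τ * μ : ℕ) : ℤ) • a ∈ intSpan ((fun b => (μ : ℤ) • b) '' A₂) := by
        rw [intSpan_smul_image]
        refine ⟨(τ : ℤ) • a, natSpan_le_intSpan _ _ hτa, ?_⟩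
        show (μ : ℤ) • (τ : ℤ) • a = _
        rw [smul_smul]; push_cast; ring_nf
      exact ⟨h1, h2⟩
  have hMem : ((τ * μ : ℕ) : ℤ) • a ∈
      natSpan ((fun b => (τ : ℤ) • b) '' A₁) ⊓ natSpan ((fun b => (μ : ℤ) • b) '' A₂) := by
    constructor
    · rw [natSpan_smul_image]
      refine ⟨(μ : ℤ) • a, hμa, ?_⟩
      show (τ : ℤ) • (μ : ℤ) • a = _
      rw [smul_smul]; push_cast; ring_nf
    · rw [natSpan_smul_image]
      refine ⟨(τ : ℤ) • a, hτa, ?_⟩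
      show (μ : ℤ) • (τ : ℤ) • a = _
      rw [smul_smul]; push_cast; ring_nf
  refine ⟨hEq, hMem, ⟨((τ * μ : ℕ) : ℤ) • a, ?_, hMem, hEq.symm⟩⟩
  exact smul_ne_zero (by positivity) ha
end
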